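/- Slab form of the box feasibility condition (precise version of Theorem 4.2): fix an index M ∈ {1,…,n} and let δ_B > 0. Then the condition "for all ζ ∈ ℝⁿ with |ζ_M| ≤ δ_B, ((δ_B μ⁽⁰⁾ + Σ_{j=1}^n ζⱼ μ⁽ʲ⁾)ᵀ x)² ≥ τ² δ_B²" holds if and only if there exists λ ≥ 0 such that the matrix A − λ(e₀e₀ᵀ − e_M e_Mᵀ) — i.e. A with λ subtracted from the (0,0)-entry and λ added to the (M,M)-entry — is positive semidefinite. -/

import Mathlib

open Matrix

noncomputable section

/-- `a j = (μ⁽ʲ⁾)ᵀ x`, the dot product of the `j`-th expected-return vector with `x`. -/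
def avec (n : ℕ) (x : Fin n → ℝ) (μ : Fin (n + 1) → Fin n → ℝ) : Fin (n + 1) → ℝ :=
  fun j => μ j ⬝ᵥ x

/-- The symmetric matrix `A = a aᵀ - τ² e₀ e₀ᵀ`. -/
def Amat (n : ℕ) (x : Fin n → ℝ) (τ : ℝ) (μ : Fin (n + 1) → Fin n → ℝ) :
    Matrix (Fin (n + 1)) (Fin (n + 1)) ℝ :=
  Matrix.of fun i j =>
    avec n x μ i * avec n x μ j - if i = 0 ∧ j = 0 then τ ^ 2 else 0

/-- The matrix `B⁽ᴱ⁾ = diag(1, -1, …, -1)`. -/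
def BE (n : ℕ) : Matrix (Fin (n + 1)) (Fin (n + 1)) ℝ :=
  Matrix.diagonal fun i => if i = 0 then 1 else -1

/-- The matrix `B⁽ᴾ⁾ = e₀e₀ᵀ - J`: `(0,0)`-entry `1`, entries `-1` for `i, j ≥ 1`,
zero elsewhere. -/
def BP (n : ℕ) : Matrix (Fin (n + 1)) (Fin (n + 1)) ℝ :=
  Matrix.of fun i j =>
    if i = 0 ∧ j = 0 then 1 else if i ≠ 0 ∧ j ≠ 0 then -1 else 0

/-- A real matrix is positive semidefinite: `zᵀ M z ≥ 0` for all `z`. -/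
def IsPSD {d : ℕ} (M : Matrix (Fin d) (Fin d) ℝ) : Prop :=
  ∀ z : Fin d → ℝ, 0 ≤ z ⬝ᵥ M *ᵥ z

/-!
Write `z = (δ, ζ)` and `q(z) = (aᵀz)² - τ² z₀²`, so the condition says `q ≥ 0` on the slab
`z₀ = δ, |z_M| ≤ δ`. If `A - λ(e₀e₀ᵀ - e_Me_Mᵀ) ⪰ 0` then `q(z) ≥ λ(z₀² - z_M²) ≥ 0` there.

Conversely, for `τ = 0` take `λ = 0`. For `τ ≠ 0` the affine map `ζ ↦ δa₀ + Σ ζⱼ aⱼ` has no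
zero on the slab; as the slab contains whole lines in every direction `eⱼ`, `j ≠ M`, all `aⱼ`
with `j ≠ M` vanish, and on the remaining segment `|ζ_M| ≤ δ` this forces `|τ| + |a_M| ≤ |a₀|`.
The form is then a binary quadratic form in `(z₀, z_M)`, and `λ = |τ||a_M|` makes it positive
semidefinite: its determinant is `λ(a₀² - (|τ| + |a_M|)²) ≥ 0`.
-/

theorem dotProduct_single_mulVec_self {ι : Type*} [Fintype ι] [DecidableEq ι]
    (z : ι → ℝ) (i j : ι) (c : ℝ) : z ⬝ᵥ single i j c *ᵥ z = c * z i * z j := by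
  rw [single_mulVec_eq, dotProduct_smul, dotProduct_single, smul_eq_mul]
  ring

theorem dotProduct_vecMulVec_self_mulVec {ι : Type*} [Fintype ι] (z a : ι → ℝ) :
    z ⬝ᵥ vecMulVec a a *ᵥ z = (a ⬝ᵥ z) ^ 2 := by
  rw [vecMulVec_mulVec, dotProduct_comm]
  simp [sq]

theorem Amat_eq_vecMulVec_sub_single (n : ℕ) (x : Fin n → ℝ) (τ : ℝ)
    (μ : Fin (n + 1) → Fin n → ℝ) :
    Amat n x τ μ = vecMulVec (avec n x μ) (avec n x μ) - single 0 0 (τ ^ 2) := by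
  ext i j
  simp [Amat, vecMulVec, single, eq_comm]

theorem dotProduct_Amat_sub_mulVec (n : ℕ) (x : Fin n → ℝ) (τ lam : ℝ)
    (μ : Fin (n + 1) → Fin n → ℝ) (m : Fin (n + 1)) (z : Fin (n + 1) → ℝ) :
    z ⬝ᵥ (Amat n x τ μ - lam • (single 0 0 1 - single m m 1)) *ᵥ z =
      (avec n x μ ⬝ᵥ z) ^ 2 - τ ^ 2 * z 0 ^ 2 - lam * (z 0 ^ 2 - z m ^ 2) := by
  simp only [Amat_eq_vecMulVec_sub_single, sub_mulVec, smul_mulVec, dotProduct_sub,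
    dotProduct_smul, dotProduct_vecMulVec_self_mulVec, dotProduct_single_mulVec_self, smul_eq_mul]
  ring

theorem sum_smul_dotProduct_eq_avec_dotProduct_cons (n : ℕ) (x : Fin n → ℝ)
    (μ : Fin (n + 1) → Fin n → ℝ) (δ : ℝ) (ζ : Fin n → ℝ) :
    (δ • μ 0 + ∑ j : Fin n, ζ j • μ j.succ) ⬝ᵥ x = avec n x μ ⬝ᵥ vecCons δ ζ := by
  have hcomb : δ • μ 0 + ∑ j : Fin n, ζ j • μ j.succ = vecCons δ ζ ᵥ* of μ := by
    rw [vecMul_eq_sum, Fin.sum_univ_succ]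
    rfl
  rw [hcomb, ← dotProduct_mulVec, dotProduct_comm]
  rfl

theorem eq_single_of_forall_abs_le {ι : Type*} [Fintype ι] [DecidableEq ι] {τ δ p : ℝ}
    {w : ι → ℝ} {m : ι} (hτ : τ ≠ 0) (hδ : 0 < δ)
    (h : ∀ ζ : ι → ℝ, |ζ m| ≤ δ → τ ^ 2 * δ ^ 2 ≤ (p * δ + w ⬝ᵥ ζ) ^ 2) :
    w = Pi.single m (w m) := by
  ext j
  rcases eq_or_ne j m with rfl | hj
  · simp
  rw [Pi.single_eq_of_ne hj]
  by_contra hw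
  have := h (Pi.single j (-(p * δ) / w j)) (by simp [Pi.single_eq_of_ne' hj, hδ.le])
  rw [dotProduct_single, mul_div_cancel₀ _ hw, add_neg_cancel] at this
  have hpos : 0 < τ ^ 2 * δ ^ 2 := by positivity
  linarith

theorem abs_add_abs_le_of_forall_abs_le {τ δ p q : ℝ} (hτ : τ ≠ 0) (hδ : 0 < δ)
    (h : ∀ s, |s| ≤ δ → τ ^ 2 * δ ^ 2 ≤ (p * δ + q * s) ^ 2) : |τ| + |q| ≤ |p| := by
  have hτδ : 0 < τ ^ 2 * δ ^ 2 := by positivity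
  have hqp : |q| < |p| := by
    by_contra! hpq
    have hroot : p * δ + q * (-(p * δ) / q) = 0 := by
      rcases eq_or_ne q 0 with rfl | hq
      · simp_all
      · field_simp
        ring
    have hs : |-(p * δ) / q| ≤ δ := by
      rw [abs_div, abs_neg, abs_mul, abs_of_pos hδ]
      exact div_le_of_le_mul₀ (abs_nonneg q) hδ.le (by nlinarith [abs_nonneg p])
    linarith [hroot ▸ h _ hs]
  have hplus : τ ^ 2 ≤ (p + q) ^ 2 := by
    refine le_of_mul_le_mul_right ?_ (by positivity : 0 < δ ^ 2)
    linarith [h δ (abs_of_pos hδ).le, show (p * δ + q * δ) ^ 2 = (p + q) ^ 2 * δ ^ 2 by ring]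
  have hminus : τ ^ 2 ≤ (p - q) ^ 2 := by
    refine le_of_mul_le_mul_right ?_ (by positivity : 0 < δ ^ 2)
    linarith [h (-δ) (by rw [abs_neg, abs_of_pos hδ]),
      show (p * δ + q * -δ) ^ 2 = (p - q) ^ 2 * δ ^ 2 by ring]
  have hsq : |τ| ^ 2 ≤ (|p| - |q|) ^ 2 := by
    -- `(|p| - |q|)² = min ((p + q)², (p - q)²)`
    have hexpand : (|p| - |q|) ^ 2 = p ^ 2 + q ^ 2 - 2 * |p * q| := by
      rw [abs_mul]
      ring_nf
      simp only [sq_abs]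
    rw [sq_abs, hexpand]
    rcases abs_cases (p * q) with ⟨hpq, _⟩ | ⟨hpq, _⟩ <;> rw [hpq] <;> linarith
  linarith [(sq_le_sq₀ (abs_nonneg τ) (by linarith)).1 hsq]

theorem sq_add_mul_sub_le_sq_of_add_abs_le {t p b : ℝ} (ht : 0 ≤ t) (h : t + |b| ≤ |p|)
    (u s : ℝ) : t ^ 2 * u ^ 2 + t * |b| * (u ^ 2 - s ^ 2) ≤ (p * u + b * s) ^ 2 := by
  have hp : (t + |b|) ^ 2 ≤ p ^ 2 := by
    rw [← sq_abs p]
    exact pow_le_pow_left₀ (by positivity) h 2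
  rcases eq_or_ne b 0 with rfl | hb
  · simp only [abs_zero, add_zero, mul_zero, zero_mul] at hp ⊢
    nlinarith [mul_le_mul_of_nonneg_right hp (sq_nonneg u)]
  -- the determinant identity of the header, written as a sum of squares
  have sos : (b ^ 2 + t * |b|) *
      ((p * u + b * s) ^ 2 - (t ^ 2 * u ^ 2 + t * |b| * (u ^ 2 - s ^ 2))) =
      (p * b * u + (b ^ 2 + t * |b|) * s) ^ 2 + t * |b| * (p ^ 2 - (t + |b|) ^ 2) * u ^ 2 := by
    linear_combination (t ^ 2 + t * |b|) * u ^ 2 * sq_abs b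
  have hsos : 0 ≤ (b ^ 2 + t * |b|) *
      ((p * u + b * s) ^ 2 - (t ^ 2 * u ^ 2 + t * |b| * (u ^ 2 - s ^ 2))) := by
    rw [sos]
    have hgap := sub_nonneg.2 hp
    positivity
  exact sub_nonneg.1 (nonneg_of_mul_nonneg_right hsos (by positivity))

theorem feasibility_box_slab_general (n : ℕ) (x : Fin n → ℝ) (τ : ℝ)
    (μ : Fin (n + 1) → Fin n → ℝ) (M : Fin n) (δB : ℝ) (hδB : 0 < δB) :
    (∀ ζ : Fin n → ℝ, |ζ M| ≤ δB →
        τ ^ 2 * δB ^ 2 ≤ ((δB • μ 0 + ∑ j : Fin n, ζ j • μ j.succ) ⬝ᵥ x) ^ 2) ↔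
      ∃ lam : ℝ, 0 ≤ lam ∧
        IsPSD (Amat n x τ μ -
          lam • (Matrix.single (0 : Fin (n + 1)) (0 : Fin (n + 1)) (1 : ℝ) -
            Matrix.single M.succ M.succ (1 : ℝ))) := by
  simp only [IsPSD, dotProduct_Amat_sub_mulVec, sum_smul_dotProduct_eq_avec_dotProduct_cons]
  set a := avec n x μ
  constructor
  · intro h
    rcases eq_or_ne τ 0 with rfl | hτ
    · exact ⟨0, le_rfl, fun z => by simpa using sq_nonneg (a ⬝ᵥ z)⟩
    simp only [dotProduct_cons] at h
    have hw := eq_single_of_forall_abs_le hτ hδB h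
    have hab : |τ| + |a M.succ| ≤ |a 0| := abs_add_abs_le_of_forall_abs_le hτ hδB fun s hs => by
      have := h (Pi.single M s) (by simpa using hs)
      rwa [hw, single_dotProduct, Pi.single_eq_same] at this
    refine ⟨|τ| * |a M.succ|, by positivity, fun z => ?_⟩
    obtain ⟨u, ζ, rfl⟩ : ∃ u ζ, z = vecCons u ζ := ⟨_, _, (cons_head_tail z).symm⟩
    rw [dotProduct_cons, hw, single_dotProduct, cons_val_zero, cons_val_succ, sub_sub,
      sub_nonneg, ← sq_abs τ]
    exact sq_add_mul_sub_le_sq_of_add_abs_le (abs_nonneg τ) hab u (ζ M)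
  · rintro ⟨lam, hlam, hpsd⟩ ζ hζ
    have hslack : 0 ≤ lam * (δB ^ 2 - ζ M ^ 2) :=
      mul_nonneg hlam (sub_nonneg.2 (sq_le_sq' (abs_le.1 hζ).1 (abs_le.1 hζ).2))
    have := hpsd (vecCons δB ζ)
    simp only [cons_val_zero, cons_val_succ] at this
    linarith

/-- Slab form of the box feasibility condition (precise version of Theorem 4.2): for a
fixed index `M ∈ {1, …, n}` (encoded as `M : Fin n`, corresponding to row/column `M.succ`
of the `(n+1) × (n+1)` matrices), the condition over the slab `|ζ_M| ≤ δ_B` holds iff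
there is `λ ≥ 0` with `A - λ (e₀e₀ᵀ - e_M e_Mᵀ)` positive semidefinite. -/
theorem feasibility_box_slab (n : ℕ) (hn : 1 ≤ n) (x : Fin n → ℝ) (τ : ℝ)
    (μ : Fin (n + 1) → Fin n → ℝ) (M : Fin n) (δB : ℝ) (hδB : 0 < δB) :
    (∀ ζ : Fin n → ℝ, |ζ M| ≤ δB →
        τ ^ 2 * δB ^ 2 ≤ ((δB • μ 0 + ∑ j : Fin n, ζ j • μ j.succ) ⬝ᵥ x) ^ 2) ↔
      ∃ lam : ℝ, 0 ≤ lam ∧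
        IsPSD (Amat n x τ μ -
          lam • (Matrix.single (0 : Fin (n + 1)) (0 : Fin (n + 1)) (1 : ℝ) -
            Matrix.single M.succ M.succ (1 : ℝ))) :=
  feasibility_box_slab_general n x τ μ M δB hδB
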